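/- Let E be a topological graph and Y a closed subset of E^0_rg. Then the spaces E_Y^0 and E_Y^1 are locally compact Hausdorff, the map d_Y : E_Y^1 → E_Y^0 is a local homeomorphism, and the map r_Y : E_Y^1 → E_Y^0 is continuous; hence E_Y = (E_Y^0, E_Y^1, d_Y, r_Y) is a topological graph. -/

import Mathlib

open Set Filter OnePoint

namespace TopGraphAux

/-- `E⁰_sce`: the open set of sources of a topological graph. -/
def graphSce {E0 E1 : Type*} [TopologicalSpace E0] (r : E1 → E0) : Set E0 :=
  (closure (Set.range r))ᶜ

/-- `E⁰_fin`: vertices having a neighborhood whose `r`-preimage is compact. -/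
def graphFin {E0 E1 : Type*} [TopologicalSpace E0] [TopologicalSpace E1] (r : E1 → E0) :
    Set E0 :=
  {v | ∃ V ∈ nhds v, IsCompact (r ⁻¹' V)}

/-- `E⁰_rg`: the open set of regular vertices of a topological graph. -/
def graphRg {E0 E1 : Type*} [TopologicalSpace E0] [TopologicalSpace E1] (r : E1 → E0) :
    Set E0 :=
  graphFin r \ closure (graphSce r)

/-- A factor map from the topological graph `F = (F0, F1, dF, rF)` to the topological graph
`E = (E0, E1, dE, rE)`: a pair of continuous maps between one-point compactifications sending
`∞` to `∞`, intertwining range and domain maps, and with the unique edge-lifting property. -/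
structure IsFactorMap {E0 E1 F0 F1 : Type*}
    [TopologicalSpace E0] [TopologicalSpace E1] [TopologicalSpace F0] [TopologicalSpace F1]
    (dE rE : E1 → E0) (dF rF : F1 → F0)
    (m0 : OnePoint F0 → OnePoint E0) (m1 : OnePoint F1 → OnePoint E1) : Prop where
  continuous_m0 : Continuous m0
  continuous_m1 : Continuous m1
  map_infty0 : m0 ∞ = ∞
  map_infty1 : m1 ∞ = ∞
  compat : ∀ (e : F1) (e' : E1), m1 ↑e = ↑e' →
    (↑(rE e') : OnePoint E0) = m0 ↑(rF e) ∧ (↑(dE e') : OnePoint E0) = m0 ↑(dF e)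
  lift : ∀ (e' : E1) (v : F0), (↑(dE e') : OnePoint E0) = m0 ↑v →
    ∃! e : F1, m1 ↑e = (↑e' : OnePoint E1) ∧ dF e = v

/-- Regularity of a factor map: every vertex mapping to a regular vertex receives an edge,
and all edges it receives are mapped to genuine edges. -/
def IsRegularFactorMap {E0 E1 F0 F1 : Type*}
    [TopologicalSpace E0] [TopologicalSpace E1] [TopologicalSpace F0] [TopologicalSpace F1]
    (rE : E1 → E0) (rF : F1 → F0)
    (m0 : OnePoint F0 → OnePoint E0) (m1 : OnePoint F1 → OnePoint E1) : Prop :=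
  ∀ (v : F0) (w : E0), m0 ↑v = ↑w → w ∈ graphRg rE →
    (∃ e : F1, rF e = v) ∧ ∀ e : F1, rF e = v → ∃ e' : E1, m1 ↑e = ↑e'

/-- `f` restricts to a homeomorphism from `U` onto `V`. -/
def IsHomeoOn {X Y : Type*} [TopologicalSpace X] [TopologicalSpace Y]
    (f : X → Y) (U : Set X) (V : Set Y) : Prop :=
  ∃ h : U ≃ₜ V, ∀ x : U, (h x : Y) = f (x : X)

/-- Extension of a map `A → OnePoint B` to the one-point compactification, sending `∞` to `∞`. -/
def onePointLift {A B : Type*} (f : A → OnePoint B) : OnePoint A → OnePoint B :=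
  fun x => Option.elim x ∞ f

/-- The relation identifying the copy in `S` of each point of `B ⊆ S` with the corresponding
point of `X`. -/
def glueRel {X : Type*} (S B : Set X) : (X ⊕ ↥S) → (X ⊕ ↥S) → Prop :=
  fun a b => ∃ x : ↥S, (x : X) ∈ B ∧
    ((a = Sum.inl ↑x ∧ b = Sum.inr x) ∨ (a = Sum.inr x ∧ b = Sum.inl ↑x))

/-- The space `X ⨿_B S` obtained from `X ⊔ S` by identifying the two copies of each point
of `B ⊆ S ⊆ X`. -/
def Glue (X : Type*) (S B : Set X) : Type _ := Quot (glueRel S B)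

instance {X : Type*} [TopologicalSpace X] (S B : Set X) : TopologicalSpace (Glue X S B) :=
  inferInstanceAs (TopologicalSpace (Quot _))

/-- The canonical inclusion `X → X ⨿_B S`. -/
def Glue.inl {X : Type*} {S B : Set X} (x : X) : Glue X S B := Quot.mk _ (Sum.inl x)

/-- The inclusion of the extra copy `S → X ⨿_B S`. -/
def Glue.inr {X : Type*} {S B : Set X} (x : ↥S) : Glue X S B := Quot.mk _ (Sum.inr x)

/-- The extension `d_Y` of the domain map `d` to the graph `E_Y`. -/
def glueD {E0 E1 : Type*} [TopologicalSpace E0] (d : E1 → E0) (Y : Set E0) :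
    Glue E1 (d ⁻¹' closure Y) (d ⁻¹' (closure Y \ Y)) → Glue E0 (closure Y) (closure Y \ Y) :=
  Quot.lift
    (Sum.elim (fun e => Glue.inl (d e)) (fun e => Glue.inr ⟨d e.1, e.2⟩))
    (by
      rintro a b ⟨x, hx, (⟨rfl, rfl⟩ | ⟨rfl, rfl⟩)⟩
      · exact Quot.sound ⟨⟨d x.1, x.2⟩, hx, Or.inl ⟨rfl, rfl⟩⟩
      · exact (Quot.sound ⟨⟨d x.1, x.2⟩, hx, Or.inl ⟨rfl, rfl⟩⟩).symm)

/-- The extension `r_Y` of the range map `r` to the graph `E_Y`. -/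
def glueR {E0 E1 : Type*} [TopologicalSpace E0] (d r : E1 → E0) (Y : Set E0) :
    Glue E1 (d ⁻¹' closure Y) (d ⁻¹' (closure Y \ Y)) → Glue E0 (closure Y) (closure Y \ Y) :=
  Quot.lift (Sum.elim (fun e => Glue.inl (r e)) (fun e => Glue.inl (r e.1)))
    (by rintro a b ⟨x, hx, (⟨rfl, rfl⟩ | ⟨rfl, rfl⟩)⟩ <;> rfl)

/-- The projection from the glued space back onto the original space. -/
def glueProj {X : Type*} (S B : Set X) : Glue X S B → X :=
  Quot.lift (Sum.elim id Subtype.val)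
    (by rintro a b ⟨x, hx, (⟨rfl, rfl⟩ | ⟨rfl, rfl⟩)⟩ <;> rfl)

/-- A point of the projective limit `E^i = Ẽ^i \ {∞}`: a compatible thread of points of the
one-point compactifications, not all equal to `∞`. -/
structure LimPt {Λ : Type*} [Preorder Λ] (X : Λ → Type*)
    (m : ∀ ⦃l l' : Λ⦄, l ≤ l' → OnePoint (X l') → OnePoint (X l)) where
  pt : ∀ l, OnePoint (X l)
  compat : ∀ ⦃l l' : Λ⦄ (h : l ≤ l'), m h (pt l') = pt l
  exists_ne_infty : ∃ l, pt l ≠ ∞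

instance {Λ : Type*} [Preorder Λ] (X : Λ → Type*) [∀ l, TopologicalSpace (X l)]
    (m : ∀ ⦃l l' : Λ⦄, l ≤ l' → OnePoint (X l') → OnePoint (X l)) :
    TopologicalSpace (LimPt X m) :=
  TopologicalSpace.induced LimPt.pt inferInstance

/-- Topological freeness: the set of base points of loops without entrances has empty
interior. -/
def IsTopologicallyFree {E0 E1 : Type*} [TopologicalSpace E0] (d r : E1 → E0) : Prop :=
  interior {v : E0 | ∃ (n : ℕ) (hn : 0 < n) (e : Fin n → E1),
      (∀ k : Fin n, d (e k) = r (e ⟨(k.1 + 1) % n, Nat.mod_lt _ hn⟩)) ∧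
      (∀ (k : Fin n) (e' : E1), r e' = r (e k) → e' = e k) ∧
      r (e ⟨0, hn⟩) = v} = ∅

open scoped Classical in
/-- Partial iteration of a partially defined map `σ` with domain `W`:
`sgdsIter σ n x = some y` iff `x ∈ dom (σ^n)` and `σ^n x = y`. -/
noncomputable def sgdsIter {X : Type*} {W : Set X} (σ : ↥W → X) : ℕ → X → Option X
  | 0, x => Option.some x
  | n + 1, x => if h : x ∈ W then sgdsIter σ n (σ ⟨x, h⟩) else none

/-! A point of `X ⨿_B S` is determined by its image under the projection `glueProj` to `X`
and by whether it lies in the extra copy of `S \ B`. When `S` is closed, the projection is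
continuous with compact preimages of compact sets, which gives local compactness; when `B` is
closed, the extra copy is open, which separates the two points over a point of `S \ B`. The map
`d_Y` commutes with both invariants, hence is locally injective, and it is open because it is
induced by the open map `d ⊔ d|` on the disjoint unions, which respects the identifications.
Since `E⁰_rg` is open, the hypothesis on `Y` makes `closure Y \ Y = closure Y \ E⁰_rg` closed. -/

end TopGraphAux

theorem IsLocalHomeomorph.of_isOpenMap_of_isLocallyInjective {X Y : Type*} [TopologicalSpace X]
    [TopologicalSpace Y] {f : X → Y} (hc : Continuous f) (ho : IsOpenMap f)
    (hi : IsLocallyInjective f) : IsLocalHomeomorph f := by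
  refine isLocalHomeomorph_iff_isOpenEmbedding_restrict.mpr fun x => ?_
  obtain ⟨U, hU, hxU, hinj⟩ := hi x
  refine ⟨U, hU.mem_nhds hxU, .of_continuous_injective_isOpenMap
    (hc.comp continuous_subtype_val) hinj.injective ?_⟩
  exact ho.comp hU.isOpenMap_subtype_val

/-- `hlift` says that `f` maps `πA`-saturated sets to `πB`-saturated sets. -/
theorem Topology.IsQuotientMap.isOpenMap_of_lift {A B P Q : Type*} [TopologicalSpace A]
    [TopologicalSpace B] [TopologicalSpace P] [TopologicalSpace Q] {πA : A → P} {πB : B → Q}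
    (hA : IsQuotientMap πA) (hB : IsQuotientMap πB) {f : A → B} {g : P → Q}
    (hf : IsOpenMap f) (hcomm : ∀ a, g (πA a) = πB (f a))
    (hlift : ∀ a b, πB b = g (πA a) → ∃ a', πA a' = πA a ∧ f a' = b) : IsOpenMap g := by
  intro G hG
  have hsat : πB ⁻¹' (g '' G) = f '' (πA ⁻¹' G) := by
    ext b
    constructor
    · rintro ⟨p, hpG, hpb⟩
      obtain ⟨a, rfl⟩ := hA.surjective p
      obtain ⟨a', ha', rfl⟩ := hlift a b hpb.symm
      exact ⟨a', by rwa [mem_preimage, ha'], rfl⟩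
    · rintro ⟨a, ha, rfl⟩
      exact ⟨πA a, ha, hcomm a⟩
  rw [← hB.isOpen_preimage, hsat]
  exact hf _ (hG.preimage hA.continuous)

theorem WeaklyLocallyCompactSpace.of_isCompact_preimage {X Y : Type*} [TopologicalSpace X]
    [TopologicalSpace Y] [WeaklyLocallyCompactSpace Y] {f : X → Y} (hf : Continuous f)
    (hK : ∀ K, IsCompact K → IsCompact (f ⁻¹' K)) : WeaklyLocallyCompactSpace X where
  exists_compact_mem_nhds x := by
    obtain ⟨K, hKc, hKx⟩ := exists_compact_mem_nhds (f x)
    exact ⟨f ⁻¹' K, hK K hKc, hf.continuousAt hKx⟩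

namespace TopGraphAux

namespace Glue

open Topology

variable {X : Type*} {S B : Set X}

def mk : X ⊕ S → Glue X S B := Quot.mk _

@[simp] theorem mk_inr (s : S) : (mk (.inr s) : Glue X S B) = Glue.inr s := rfl

@[elab_as_elim]
theorem ind {motive : Glue X S B → Prop} (inl : ∀ x, motive (Glue.inl x))
    (inr : ∀ s, motive (Glue.inr s)) (p : Glue X S B) : motive p :=
  Quot.ind (Sum.rec inl inr) p

def IsExtra : Glue X S B → Prop :=
  Quot.lift (Sum.elim (fun _ => False) (fun s => (s : X) ∉ B))
    (by rintro _ _ ⟨x, hx, (⟨rfl, rfl⟩ | ⟨rfl, rfl⟩)⟩ <;> simp [hx])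

@[simp] theorem glueProj_inl (x : X) : glueProj S B (Glue.inl x) = x := rfl

@[simp] theorem glueProj_inr (s : S) : glueProj S B (Glue.inr s) = s := rfl

@[simp] theorem not_isExtra_inl (x : X) : ¬(Glue.inl x : Glue X S B).IsExtra := id

@[simp] theorem isExtra_inr (s : S) : (Glue.inr s : Glue X S B).IsExtra ↔ (s : X) ∉ B := Iff.rfl

theorem glueProj_notMem_of_isExtra {p : Glue X S B} (hp : p.IsExtra) : glueProj S B p ∉ B := by
  induction p using Glue.ind with
  | inl x => exact (not_isExtra_inl x hp).elim
  | inr s => exact hp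

theorem ext {p q : Glue X S B} (hproj : glueProj S B p = glueProj S B q)
    (hextra : p.IsExtra ↔ q.IsExtra) : p = q := by
  induction p using Glue.ind <;> induction q using Glue.ind <;>
    simp only [glueProj_inl, glueProj_inr, not_isExtra_inl, isExtra_inr, false_iff, iff_false,
      not_not] at hproj hextra
  case inl.inl => rw [hproj]
  case inl.inr t => subst hproj; exact Quot.sound ⟨t, hextra, Or.inl ⟨rfl, rfl⟩⟩
  case inr.inl s _ => subst hproj; exact Quot.sound ⟨s, hextra, Or.inr ⟨rfl, rfl⟩⟩
  case inr.inr => rw [Subtype.ext hproj]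

variable [TopologicalSpace X]

theorem isQuotientMap_mk : IsQuotientMap (mk : X ⊕ S → Glue X S B) := isQuotientMap_quot_mk

theorem isOpen_iff {G : Set (Glue X S B)} :
    IsOpen G ↔ IsOpen (Glue.inl ⁻¹' G) ∧ IsOpen (Glue.inr ⁻¹' G) :=
  isOpen_coinduced.trans isOpen_sum_iff

theorem continuous_inl : Continuous (Glue.inl : X → Glue X S B) :=
  isQuotientMap_mk.continuous.comp _root_.continuous_inl

theorem continuous_glueProj : Continuous (glueProj S B) :=
  isQuotientMap_mk.continuous_iff.mpr (continuous_id.sumElim continuous_subtype_val)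

theorem isOpen_setOf_isExtra (hB : IsClosed B) : IsOpen {p : Glue X S B | p.IsExtra} :=
  isOpen_iff.mpr ⟨isOpen_empty, hB.isOpen_compl.preimage continuous_subtype_val⟩

theorem isOpen_setOf_not_isExtra (hB : IsClosed B) :
    IsOpen {p : Glue X S B | ¬p.IsExtra ∧ glueProj S B p ∉ B} := by
  refine isOpen_iff.mpr ⟨?_, ?_⟩
  · convert hB.isOpen_compl using 1
    ext
    simp
  · simp

theorem t2Space [T2Space X] (hB : IsClosed B) : T2Space (Glue X S B) := by
  have separate : ∀ p q : Glue X S B, glueProj S B p = glueProj S B q → p.IsExtra → ¬q.IsExtra →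
      ∃ u v, IsOpen u ∧ IsOpen v ∧ p ∈ u ∧ q ∈ v ∧ Disjoint u v := fun p q hpq hp hq =>
    ⟨_, _, isOpen_setOf_isExtra hB, isOpen_setOf_not_isExtra hB, hp,
      ⟨hq, hpq ▸ glueProj_notMem_of_isExtra hp⟩,
      disjoint_left.mpr fun _ hr hr' => hr'.1 hr⟩
  refine ⟨fun p q hne => ?_⟩
  by_cases hproj : glueProj S B p = glueProj S B q
  · by_cases hp : p.IsExtra
    · exact separate p q hproj hp fun hq => hne (ext hproj (iff_of_true hp hq))
    · have hq : q.IsExtra := by_contra fun hq => hne (ext hproj (iff_of_false hp hq))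
      obtain ⟨u, v, hu, hv, hqu, hpv, huv⟩ := separate q p hproj.symm hq hp
      exact ⟨v, u, hv, hu, hpv, hqu, huv.symm⟩
  · exact separated_by_continuous continuous_glueProj hproj

theorem isCompact_preimage_glueProj (hS : IsClosed S) {K : Set X} (hK : IsCompact K) :
    IsCompact (glueProj S B ⁻¹' K) := by
  have hcover : glueProj S B ⁻¹' K = mk '' (Sum.inl '' K ∪ Sum.inr '' ((↑) ⁻¹' K : Set S)) := by
    refine subset_antisymm (fun p hp => ?_) ?_
    · induction p using Glue.ind with
      | inl x => exact ⟨_, Or.inl ⟨x, hp, rfl⟩, rfl⟩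
      | inr s => exact ⟨_, Or.inr ⟨s, hp, rfl⟩, rfl⟩
    · rintro _ ⟨_, ⟨x, hx, rfl⟩ | ⟨s, hs, rfl⟩, rfl⟩
      exacts [hx, hs]
  rw [hcover]
  exact ((hK.image _root_.continuous_inl).union
    ((hS.isClosedEmbedding_subtypeVal.isCompact_preimage hK).image _root_.continuous_inr)).image
      isQuotientMap_mk.continuous

theorem weaklyLocallyCompactSpace [WeaklyLocallyCompactSpace X] (hS : IsClosed S) :
    WeaklyLocallyCompactSpace (Glue X S B) :=
  .of_isCompact_preimage continuous_glueProj fun _ => isCompact_preimage_glueProj hS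

end Glue

section GlueMaps

open Topology

variable {E0 E1 : Type*} [TopologicalSpace E0] {d : E1 → E0} {Y : Set E0}

theorem glueD_comp_mk :
    glueD d Y ∘ Glue.mk = Glue.mk ∘ Sum.map d ((closure Y).restrictPreimage d) :=
  funext (Sum.rec (fun _ => rfl) (fun _ => rfl))

theorem glueProj_glueD (p : Glue E1 (d ⁻¹' closure Y) (d ⁻¹' (closure Y \ Y))) :
    glueProj _ _ (glueD d Y p) = d (glueProj _ _ p) := by
  induction p using Glue.ind <;> rfl

theorem isExtra_glueD (p : Glue E1 (d ⁻¹' closure Y) (d ⁻¹' (closure Y \ Y))) :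
    (glueD d Y p).IsExtra ↔ p.IsExtra := by
  induction p using Glue.ind <;> rfl

theorem glueR_eq (r : E1 → E0) :
    glueR d r Y = Glue.inl ∘ r ∘ glueProj (d ⁻¹' closure Y) (d ⁻¹' (closure Y \ Y)) :=
  funext (Glue.ind (fun _ => rfl) (fun _ => rfl))

variable [TopologicalSpace E1]

theorem continuous_glueD (hd : Continuous d) : Continuous (glueD d Y) := by
  rw [Glue.isQuotientMap_mk.continuous_iff, glueD_comp_mk]
  exact Glue.isQuotientMap_mk.continuous.comp (hd.sumMap hd.restrictPreimage)

theorem isLocallyInjective_glueD (hd : IsLocallyInjective d) :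
    IsLocallyInjective (glueD d Y) := fun p => by
  obtain ⟨U, hU, hpU, hinj⟩ := hd (glueProj _ _ p)
  refine ⟨glueProj _ _ ⁻¹' U, hU.preimage Glue.continuous_glueProj, hpU,
    fun q hq q' hq' h => Glue.ext (hinj hq hq' ?_) ?_⟩
  · simpa only [glueProj_glueD] using congrArg (glueProj _ _) h
  · rw [← isExtra_glueD, h, isExtra_glueD]

theorem isOpenMap_glueD (hd : IsOpenMap d) : IsOpenMap (glueD d Y) := by
  refine Glue.isQuotientMap_mk.isOpenMap_of_lift Glue.isQuotientMap_mk
    (hd.sumMap (hd.restrictPreimage _)) (congrFun glueD_comp_mk) fun a b hb => ?_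
  obtain ⟨e, he⟩ : ∃ e, glueProj (d ⁻¹' closure Y) (d ⁻¹' (closure Y \ Y)) (Glue.mk a) = e :=
    ⟨_, rfl⟩
  have hproj : glueProj (closure Y) (closure Y \ Y) (Glue.mk b) = d e := by
    rw [hb, glueProj_glueD, he]
  have hextra : (Glue.mk b : Glue E0 _ (closure Y \ Y)).IsExtra ↔
      (Glue.mk a : Glue E1 _ (d ⁻¹' (closure Y \ Y))).IsExtra := by rw [hb, isExtra_glueD]
  rcases b with v | s
  · exact ⟨Sum.inl e, Glue.ext he.symm hextra, congrArg Sum.inl hproj.symm⟩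
  · simp only [Glue.mk_inr, Glue.glueProj_inr, Glue.isExtra_inr] at hproj hextra
    refine ⟨Sum.inr ⟨e, show d e ∈ _ from hproj ▸ s.2⟩, Glue.ext he.symm ?_,
      congrArg Sum.inr (Subtype.ext hproj.symm)⟩
    simpa only [Glue.mk_inr, Glue.isExtra_inr, mem_preimage, ← hproj] using hextra

theorem isLocalHomeomorph_glueD (hd : IsLocalHomeomorph d) : IsLocalHomeomorph (glueD d Y) :=
  .of_isOpenMap_of_isLocallyInjective (continuous_glueD hd.continuous)
    (isOpenMap_glueD hd.isOpenMap) (isLocallyInjective_glueD hd.isLocallyInjective)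

theorem continuous_glueR {r : E1 → E0} (hr : Continuous r) : Continuous (glueR d r Y) := by
  rw [glueR_eq]
  exact Glue.continuous_inl.comp (hr.comp Glue.continuous_glueProj)

end GlueMaps

theorem isOpen_graphRg {E0 E1 : Type*} [TopologicalSpace E0] [TopologicalSpace E1]
    (r : E1 → E0) : IsOpen (graphRg r) := by
  refine IsOpen.sdiff (isOpen_iff_mem_nhds.mpr ?_) isClosed_closure
  rintro v ⟨V, hV, hc⟩
  filter_upwards [eventually_mem_nhds_iff.mpr hV] with w hw using ⟨V, hw, hc⟩

theorem isClosed_closure_diff_of_closure_inter_eq {X : Type*} [TopologicalSpace X]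
    {U Y : Set X} (hU : IsOpen U) (h : closure Y ∩ U = Y) : IsClosed (closure Y \ Y) := by
  nth_rewrite 2 [← h]
  rw [sdiff_self_inter]
  exact isClosed_closure.sdiff hU

theorem statement6_general
    {E0 E1 : Type*} [TopologicalSpace E0] [TopologicalSpace E1]
    [T2Space E0] [T2Space E1] [LocallyCompactSpace E0] [LocallyCompactSpace E1]
    (d r : E1 → E0) (hd : IsLocalHomeomorph d) (hr : Continuous r)
    (Y : Set E0) (hYc : closure Y ∩ graphRg r = Y) :
    T2Space (Glue E0 (closure Y) (closure Y \ Y)) ∧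
      LocallyCompactSpace (Glue E0 (closure Y) (closure Y \ Y)) ∧
      T2Space (Glue E1 (d ⁻¹' closure Y) (d ⁻¹' (closure Y \ Y))) ∧
      LocallyCompactSpace (Glue E1 (d ⁻¹' closure Y) (d ⁻¹' (closure Y \ Y))) ∧
      IsLocalHomeomorph (glueD d Y) ∧
      Continuous (glueR d r Y) := by
  have hB : IsClosed (closure Y \ Y) :=
    isClosed_closure_diff_of_closure_inter_eq (isOpen_graphRg r) hYc
  have := Glue.t2Space (S := closure Y) hB
  have := Glue.t2Space (S := d ⁻¹' closure Y) (hB.preimage hd.continuous)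
  have := Glue.weaklyLocallyCompactSpace (S := closure Y) (B := closure Y \ Y) isClosed_closure
  have := Glue.weaklyLocallyCompactSpace (S := d ⁻¹' closure Y) (B := d ⁻¹' (closure Y \ Y))
    (isClosed_closure.preimage hd.continuous)
  exact ⟨inferInstance, inferInstance, inferInstance, inferInstance,
    isLocalHomeomorph_glueD hd, continuous_glueR hr⟩

/-- For a topological graph `E` and a closed subset `Y` of `E⁰_rg`,
the spaces `E_Y⁰` and `E_Y¹` are locally compact Hausdorff, `d_Y` is a local homeomorphism
and `r_Y` is continuous; hence `E_Y` is a topological graph. -/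
theorem statement6
    {E0 E1 : Type*} [TopologicalSpace E0] [TopologicalSpace E1]
    [T2Space E0] [T2Space E1] [LocallyCompactSpace E0] [LocallyCompactSpace E1]
    (d r : E1 → E0) (hd : IsLocalHomeomorph d) (hr : Continuous r)
    (Y : Set E0) (hY : Y ⊆ graphRg r) (hYc : closure Y ∩ graphRg r = Y) :
    T2Space (Glue E0 (closure Y) (closure Y \ Y)) ∧
      LocallyCompactSpace (Glue E0 (closure Y) (closure Y \ Y)) ∧
      T2Space (Glue E1 (d ⁻¹' closure Y) (d ⁻¹' (closure Y \ Y))) ∧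
      LocallyCompactSpace (Glue E1 (d ⁻¹' closure Y) (d ⁻¹' (closure Y \ Y))) ∧
      IsLocalHomeomorph (glueD d Y) ∧
      Continuous (glueR d r Y) :=
  statement6_general d r hd hr Y hYc

end TopGraphAux
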